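/- Let W ∈ ℝ^{n×n} be doubly stochastic and suppose that ‖Wz − W_∞z‖ ≤ σ‖z − W_∞z‖ for all z ∈ ℝⁿ, where 0 < σ < 1. Let α ∈ ℝ and x, y ∈ ℝⁿ, and set x⁺ := Wx − αy. Then ‖x⁺ − W_∞x⁺‖² ≤ ((1+σ²)/2)·‖x − W_∞x‖² + (2α²/(1−σ²))·‖y − W_∞y‖². -/

import Mathlib

/-!
Since the columns of `W` sum to one, `W_∞ W = W_∞`, so the consensus error of `x⁺ = W x - α y`
is `(W x - W_∞ x) - α (y - W_∞ y)`. Its norm is at most `σ ‖x - W_∞ x‖ + |α| ‖y - W_∞ y‖`, and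
Young's inequality `2σab ≤ (1 - σ²)/2 · a² + 2σ²/(1 - σ²) · b²` splits the square of this bound.
-/

open Finset

theorem Matrix.of_const_mul_eq_of_sum_col_eq_one {l m n R : Type*} [Fintype m]
    [NonAssocSemiring R] (c : R) (W : Matrix m n R) (hW : ∀ j, ∑ i, W i j = 1) :
    (Matrix.of fun (_ : l) (_ : m) => c) * W = Matrix.of fun _ _ => c := by
  ext i j
  simp only [Matrix.mul_apply, Matrix.of_apply, ← mul_sum, hW, mul_one]

theorem norm_sub_map_sub_smul_le_of_comp_eq {𝕜 E : Type*} [NormedField 𝕜]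
    [SeminormedAddCommGroup E] [NormedSpace 𝕜 E] {T S : E →L[𝕜] E} (hST : S.comp T = S)
    (α : 𝕜) (x y : E) :
    ‖(T x - α • y) - S (T x - α • y)‖ ≤ ‖T x - S x‖ + ‖α‖ * ‖y - S y‖ := by
  have hSTx : S (T x) = S x := by rw [← ContinuousLinearMap.comp_apply, hST]
  have hsplit : (T x - α • y) - S (T x - α • y) = (T x - S x) - α • (y - S y) := by
    rw [map_sub, map_smul, hSTx, smul_sub]
    abel
  rw [hsplit, ← norm_smul]
  exact norm_sub_le _ _

theorem sq_mul_add_le_of_sq_lt_one {σ : ℝ} (hσ : σ ^ 2 < 1) (a b : ℝ) :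
    (σ * a + b) ^ 2 ≤ (1 + σ ^ 2) / 2 * a ^ 2 + 2 / (1 - σ ^ 2) * b ^ 2 := by
  have hε : 0 < 1 - σ ^ 2 := by linarith
  have young : 2 * σ * a * b ≤ (1 - σ ^ 2) / 2 * a ^ 2 + 2 * σ ^ 2 / (1 - σ ^ 2) * b ^ 2 := by
    rw [div_mul_eq_mul_div, div_mul_eq_mul_div, ← sub_nonneg]
    have hsq : 0 ≤ ((1 - σ ^ 2) * a - 2 * σ * b) ^ 2 / (2 * (1 - σ ^ 2)) := by positivity
    convert hsq using 1
    field_simp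
    ring
  have hb : 2 * σ ^ 2 / (1 - σ ^ 2) * b ^ 2 + b ^ 2 ≤ 2 / (1 - σ ^ 2) * b ^ 2 := by
    rw [← sub_nonneg]
    have hsq : 0 ≤ b ^ 2 := sq_nonneg b
    convert hsq using 1
    field_simp
    ring
  nlinarith

theorem consensus_error_contraction {n : ℕ}
    (W : Matrix (Fin n) (Fin n) ℝ)
    (hW_col : ∀ r, ∑ i, W i r = 1)
    (σ α : ℝ) (hσ0 : 0 < σ) (hσ1 : σ < 1) :
    let Winf : Matrix (Fin n) (Fin n) ℝ := Matrix.of fun _ _ => 1 / (n : ℝ)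
    let T : EuclideanSpace ℝ (Fin n) →L[ℝ] EuclideanSpace ℝ (Fin n) :=
      Matrix.toEuclideanCLM (𝕜 := ℝ) W
    let S : EuclideanSpace ℝ (Fin n) →L[ℝ] EuclideanSpace ℝ (Fin n) :=
      Matrix.toEuclideanCLM (𝕜 := ℝ) Winf
    (∀ z : EuclideanSpace ℝ (Fin n), ‖T z - S z‖ ≤ σ * ‖z - S z‖) →
      ∀ x y : EuclideanSpace ℝ (Fin n),
        ‖(T x - α • y) - S (T x - α • y)‖ ^ 2 ≤
          (1 + σ ^ 2) / 2 * ‖x - S x‖ ^ 2 +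
            2 * α ^ 2 / (1 - σ ^ 2) * ‖y - S y‖ ^ 2 := by
  intro Winf T S hcontr x y
  have hST : S.comp T = S := by
    change S * T = S
    rw [← map_mul, Matrix.of_const_mul_eq_of_sum_col_eq_one _ W hW_col]
  have hbound : ‖(T x - α • y) - S (T x - α • y)‖ ≤ σ * ‖x - S x‖ + |α| * ‖y - S y‖ :=
    (norm_sub_map_sub_smul_le_of_comp_eq hST α x y).trans
      (by rw [Real.norm_eq_abs]; gcongr; exact hcontr x)
  have hσ : σ ^ 2 < 1 := by nlinarith
  calc ‖(T x - α • y) - S (T x - α • y)‖ ^ 2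
      ≤ (σ * ‖x - S x‖ + |α| * ‖y - S y‖) ^ 2 := by gcongr
    _ ≤ (1 + σ ^ 2) / 2 * ‖x - S x‖ ^ 2 + 2 / (1 - σ ^ 2) * (|α| * ‖y - S y‖) ^ 2 :=
      sq_mul_add_le_of_sq_lt_one hσ _ _
    _ = (1 + σ ^ 2) / 2 * ‖x - S x‖ ^ 2 + 2 * α ^ 2 / (1 - σ ^ 2) * ‖y - S y‖ ^ 2 := by
      rw [mul_pow, sq_abs]
      ring
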